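/- For all Ω > 0, I_p > 0, Θ > 0, σ_ε² ≥ 0 and B > 0 with B·I_p·Ω ≠ 1: ∫_{Θ}^{∞} ( ∫_{σ_ε²}^{∞} ln(1 + (I_p/y) x) e^{−x/Ω} dx ) B e^{−B y} dy = Ω · 𝕁₂(Ω), where 𝕁₂(Ω) = −e^{−σ_ε²/Ω} E₁(BΘ) − (1/(1 − I_pΩB)) { −e^{I_pσ_ε²B − σ_ε²/Ω} E₁(B(Θ + I_pσ_ε²)) + e^{Θ/(I_pΩ) − BΘ} E₁((Θ + I_pσ_ε²)/(I_pΩ)) } + e^{−BΘ − σ_ε²/Ω} { ln(1 + I_pσ_ε²/Θ) + e^{(Θ + I_pσ_ε²)/(I_pΩ)} E₁((Θ + I_pσ_ε²)/(I_pΩ)) }, and E₁(z) = ∫_z^{∞} (e^{−t}/t) dt for z > 0. -/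

import Mathlib

/-!
Integrating by parts, with `c = I_p / y` the inner integral is
`∫_a^∞ log (1 + c x) e^{-x/Ω} dx = Ω e^{-a/Ω} log (1 + c a) + Ω e^{1/(cΩ)} E₁((1 + c a)/(cΩ))`,
using `E₁'(z) = -e^{-z}/z`. The outer integrand then splits into `log (1 + k/y) B e^{-By}` and
`e^{y/s} E₁((y + k)/s) B e^{-By}`, each the derivative of an explicit combination of
exponentials, a logarithm and `E₁` that vanishes at infinity. Both are nonnegative, so the
fundamental theorem of calculus on `(Θ, ∞)` yields their integrability and their integrals.
-/

open Real MeasureTheory Set Filter Topology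

noncomputable def E1 (z : ℝ) : ℝ := ∫ t in Set.Ioi z, Real.exp (-t) / t

noncomputable def J2 (σe Ip Θ B Ω : ℝ) : ℝ :=
  -Real.exp (-σe / Ω) * E1 (B * Θ)
    - 1 / (1 - Ip * Ω * B) *
        (-Real.exp (Ip * σe * B - σe / Ω) * E1 (B * (Θ + Ip * σe))
          + Real.exp (Θ / (Ip * Ω) - B * Θ) * E1 ((Θ + Ip * σe) / (Ip * Ω)))
    + Real.exp (-B * Θ - σe / Ω) *
        (Real.log (1 + Ip * σe / Θ)
          + Real.exp ((Θ + Ip * σe) / (Ip * Ω)) * E1 ((Θ + Ip * σe) / (Ip * Ω)))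

lemma integrableOn_exp_neg_div_self_Ioi {z : ℝ} (hz : 0 < z) :
    IntegrableOn (fun t => exp (-t) / t) (Ioi z) := by
  refine Integrable.mono' ((integrableOn_exp_neg_Ioi z).div_const z)
    (by fun_prop : Measurable fun t : ℝ => exp (-t) / t).aestronglyMeasurable ?_
  filter_upwards [ae_restrict_mem measurableSet_Ioi] with t (ht : z < t)
  rw [norm_of_nonneg (by have := hz.trans ht; positivity)]
  gcongr

lemma E1_nonneg {z : ℝ} (hz : 0 < z) : 0 ≤ E1 z :=
  setIntegral_nonneg measurableSet_Ioi fun t (ht : z < t) => by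
    have := hz.trans ht; positivity

lemma E1_le_exp_neg_div {z : ℝ} (hz : 0 < z) : E1 z ≤ exp (-z) / z := calc
  E1 z ≤ ∫ t in Ioi z, exp (-t) / z :=
    setIntegral_mono_on (integrableOn_exp_neg_div_self_Ioi hz)
      ((integrableOn_exp_neg_Ioi z).div_const z) measurableSet_Ioi
      fun t (ht : z < t) => by gcongr
  _ = exp (-z) / z := by rw [integral_div, integral_exp_neg_Ioi]

lemma hasDerivAt_E1 {z : ℝ} (hz : 0 < z) : HasDerivAt E1 (-(exp (-z) / z)) z := by
  have hcont : ContinuousOn (fun t : ℝ => exp (-t) / t) (Ioi 0) :=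
    by fun_prop (disch := exact fun t (ht : 0 < t) => ht.ne')
  have hftc : HasDerivAt (fun w => ∫ t in z..w, exp (-t) / t) (exp (-z) / z) z :=
    intervalIntegral.integral_hasDerivAt_right (by simp)
      (hcont.stronglyMeasurableAtFilter isOpen_Ioi z hz) (hcont.continuousAt (Ioi_mem_nhds hz))
  refine (((hasDerivAt_const z (E1 z)).sub hftc).congr_deriv (zero_sub _)).congr_of_eventuallyEq ?_
  filter_upwards [Ioi_mem_nhds hz] with w (hw : 0 < w)
  show E1 w = E1 z - ∫ t in z..w, exp (-t) / t
  rw [← intervalIntegral.integral_Ioi_sub_Ioi' (integrableOn_exp_neg_div_self_Ioi hz)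
    (integrableOn_exp_neg_div_self_Ioi hw)]
  unfold E1
  ring

lemma tendsto_exp_mul_E1_atTop : Tendsto (fun z => exp z * E1 z) atTop (𝓝 0) := by
  refine squeeze_zero' ?_ ?_ tendsto_inv_atTop_zero
  · filter_upwards [eventually_gt_atTop 0] with z hz
    have := E1_nonneg hz; positivity
  · filter_upwards [eventually_gt_atTop 0] with z hz
    calc exp z * E1 z ≤ exp z * (exp (-z) / z) := by gcongr; exact E1_le_exp_neg_div hz
      _ = z⁻¹ := by rw [mul_div_assoc', ← exp_add, add_neg_cancel, exp_zero, one_div]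

lemma tendsto_E1_atTop : Tendsto E1 atTop (𝓝 0) := by
  refine squeeze_zero' (eventually_gt_atTop 0 |>.mono fun z hz => E1_nonneg hz)
    (eventually_gt_atTop 0 |>.mono fun z hz => E1_le_exp_neg_div hz) ?_
  exact tendsto_exp_neg_atTop_nhds_zero.div_atTop tendsto_id

lemma integrableOn_Ioi_and_integral_eq_neg_of_hasDerivAt {f F : ℝ → ℝ} {a : ℝ}
    (hF : ∀ x ∈ Ici a, HasDerivAt F (f x) x) (hf : ∀ x ∈ Ioi a, 0 ≤ f x)
    (hlim : Tendsto F atTop (𝓝 0)) :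
    IntegrableOn f (Ioi a) ∧ ∫ x in Ioi a, f x = -F a :=
  ⟨integrableOn_Ioi_deriv_of_nonneg' hF hf hlim,
    by rw [integral_Ioi_of_hasDerivAt_of_nonneg' hF hf hlim, zero_sub]⟩

section LogIntegral

variable {c Ω : ℝ}

lemma hasDerivAt_log_one_add_mul_mul_exp_antideriv (hc : 0 < c) (hΩ : 0 < Ω) {x : ℝ}
    (hx : 0 ≤ x) :
    HasDerivAt (fun x => -(Ω * exp (-x / Ω) * log (1 + c * x))
        - Ω * exp (1 / (c * Ω)) * E1 ((1 + c * x) / (c * Ω)))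
      (log (1 + c * x) * exp (-x / Ω)) x := by
  have hpos : 0 < 1 + c * x := by positivity
  have hexp : HasDerivAt (fun x => exp (-x / Ω)) (exp (-x / Ω) * (-1 / Ω)) x :=
    ((hasDerivAt_neg x).div_const Ω).exp
  have hlog : HasDerivAt (fun x => log (1 + c * x)) (c / (1 + c * x)) x := by
    simpa using (((hasDerivAt_id x).const_mul c).const_add 1).log hpos.ne'
  have hE1 : HasDerivAt (fun x => E1 ((1 + c * x) / (c * Ω)))
      (-(exp (-((1 + c * x) / (c * Ω))) / ((1 + c * x) / (c * Ω))) * (c / (c * Ω))) x :=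
    (hasDerivAt_E1 (by positivity)).comp x
      (by simpa using (((hasDerivAt_id x).const_mul c).const_add 1).div_const (c * Ω))
  have hshift : exp (1 / (c * Ω)) * exp (-((1 + c * x) / (c * Ω))) = exp (-x / Ω) := by
    rw [← exp_add]; congr 1; field_simp; ring
  refine ((hexp.const_mul Ω).mul hlog).neg.sub (hE1.const_mul _) |>.congr_deriv ?_
  rw [← hshift]
  field_simp
  ring

lemma tendsto_log_one_add_mul_mul_exp_antideriv (hc : 0 < c) (hΩ : 0 < Ω) :
    Tendsto (fun x => -(Ω * exp (-x / Ω) * log (1 + c * x))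
        - Ω * exp (1 / (c * Ω)) * E1 ((1 + c * x) / (c * Ω))) atTop (𝓝 0) := by
  have hlin : Tendsto (fun x => c * Ω * ((x / Ω) ^ 1 * exp (-(x / Ω)))) atTop (𝓝 0) := by
    simpa using ((tendsto_pow_mul_exp_neg_atTop_nhds_zero 1).comp
      (tendsto_id.atTop_div_const hΩ)).const_mul (c * Ω)
  have hlog : Tendsto (fun x => exp (-x / Ω) * log (1 + c * x)) atTop (𝓝 0) := by
    refine squeeze_zero' ?_ ?_ hlin
    · filter_upwards [eventually_ge_atTop 0] with x hx
      have := log_nonneg (by nlinarith : (1 : ℝ) ≤ 1 + c * x); positivity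
    · filter_upwards [eventually_ge_atTop 0] with x hx
      have := log_le_sub_one_of_pos (by positivity : 0 < 1 + c * x)
      calc exp (-x / Ω) * log (1 + c * x) ≤ exp (-x / Ω) * (c * x) := by gcongr; linarith
        _ = c * Ω * ((x / Ω) ^ 1 * exp (-(x / Ω))) := by field_simp
  have harg : Tendsto (fun x => (1 + c * x) / (c * Ω)) atTop atTop :=
    (tendsto_atTop_add_const_left _ 1 (tendsto_id.const_mul_atTop hc)).atTop_div_const
      (by positivity)
  simpa [mul_assoc] using (hlog.const_mul Ω).neg.sub ((tendsto_E1_atTop.comp harg).const_mul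
    (Ω * exp (1 / (c * Ω))))

theorem integral_log_one_add_mul_mul_exp {a : ℝ} (hc : 0 < c) (ha : 0 ≤ a) (hΩ : 0 < Ω) :
    ∫ x in Ioi a, log (1 + c * x) * exp (-x / Ω)
      = Ω * exp (-a / Ω) * log (1 + c * a)
        + Ω * exp (1 / (c * Ω)) * E1 ((1 + c * a) / (c * Ω)) := by
  rw [(integrableOn_Ioi_and_integral_eq_neg_of_hasDerivAt
    (fun x (hx : a ≤ x) => hasDerivAt_log_one_add_mul_mul_exp_antideriv hc hΩ (ha.trans hx))
    (fun x (hx : a < x) => ?_) (tendsto_log_one_add_mul_mul_exp_antideriv hc hΩ)).2]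
  · ring
  · have := log_nonneg (by nlinarith : (1 : ℝ) ≤ 1 + c * x); positivity

end LogIntegral

section OuterIntegrals

variable {k B : ℝ}

lemma hasDerivAt_log_one_add_div_mul_exp_antideriv (hk : 0 ≤ k) (hB : 0 < B) {y : ℝ}
    (hy : 0 < y) :
    HasDerivAt
      (fun y => E1 (B * y) - exp (B * k) * E1 (B * (y + k)) - exp (-B * y) * log (1 + k / y))
      (log (1 + k / y) * (B * exp (-B * y))) y := by
  have hyk : 0 < y + k := by positivity
  have hE1 : HasDerivAt (fun y => E1 (B * y)) (-(exp (-(B * y)) / (B * y)) * (B * 1)) y :=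
    (hasDerivAt_E1 (by positivity)).comp y ((hasDerivAt_id y).const_mul B)
  have hE1k : HasDerivAt (fun y => E1 (B * (y + k)))
      (-(exp (-(B * (y + k))) / (B * (y + k))) * (B * 1)) y :=
    (hasDerivAt_E1 (by positivity)).comp y (((hasDerivAt_id y).add_const k).const_mul B)
  have hexp : HasDerivAt (fun y => exp (-B * y)) (exp (-B * y) * (-B * 1)) y :=
    ((hasDerivAt_id y).const_mul (-B)).exp
  have hlog : HasDerivAt (fun y => log (1 + k / y)) ((-k / y ^ 2) / (1 + k / y)) y := by
    simpa using (((hasDerivAt_const y k).div (hasDerivAt_id y) hy.ne').const_add 1).log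
      (by positivity : (0 : ℝ) < 1 + k / y).ne'
  have hshift : exp (-(B * y)) = exp (B * k) * exp (-(B * (y + k))) := by
    rw [← exp_add]; ring_nf
  refine (hE1.sub (hE1k.const_mul _)).sub (hexp.mul hlog) |>.congr_deriv ?_
  rw [neg_mul B y, hshift]
  field_simp
  ring

lemma tendsto_log_one_add_div_mul_exp_antideriv (hB : 0 < B) :
    Tendsto
      (fun y => E1 (B * y) - exp (B * k) * E1 (B * (y + k)) - exp (-B * y) * log (1 + k / y))
      atTop (𝓝 0) := by
  have hE1 := tendsto_E1_atTop.comp (tendsto_id.const_mul_atTop hB)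
  have hE1k := tendsto_E1_atTop.comp
    ((tendsto_atTop_add_const_right _ k tendsto_id).const_mul_atTop hB)
  have hexp := tendsto_exp_neg_atTop_nhds_zero.comp (tendsto_id.const_mul_atTop hB)
  have hlog : Tendsto (fun y => log (1 + k / y)) atTop (𝓝 (log (1 + 0))) :=
    (tendsto_const_nhds.add (tendsto_const_nhds.div_atTop tendsto_id)).log (by norm_num)
  simpa [Function.comp_def] using (hE1.sub (hE1k.const_mul (exp (B * k)))).sub (hexp.mul hlog)

theorem integral_log_one_add_div_mul_exp {Θ : ℝ} (hk : 0 ≤ k) (hΘ : 0 < Θ) (hB : 0 < B) :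
    IntegrableOn (fun y => log (1 + k / y) * (B * exp (-B * y))) (Ioi Θ) ∧
      ∫ y in Ioi Θ, log (1 + k / y) * (B * exp (-B * y))
        = exp (-B * Θ) * log (1 + k / Θ) - E1 (B * Θ) + exp (B * k) * E1 (B * (Θ + k)) := by
  refine (integrableOn_Ioi_and_integral_eq_neg_of_hasDerivAt
    (fun y (hy : Θ ≤ y) => hasDerivAt_log_one_add_div_mul_exp_antideriv hk hB (hΘ.trans_le hy))
    (fun y (hy : Θ < y) => ?_) (tendsto_log_one_add_div_mul_exp_antideriv hB)).imp_right
    fun h => h.trans (by ring)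
  have := log_nonneg (le_add_of_nonneg_right (div_nonneg hk (hΘ.trans hy).le))
  positivity

variable {s : ℝ}

lemma hasDerivAt_exp_div_mul_E1_mul_exp_antideriv (hs : 0 < s) (hB : 0 < B) (hBs : B * s ≠ 1)
    {y : ℝ} (hyk : 0 < y + k) :
    HasDerivAt (fun y => B * s / (1 - B * s) *
        (exp (y / s - B * y) * E1 ((y + k) / s) - exp (B * k - k / s) * E1 (B * (y + k))))
      (exp (y / s) * E1 ((y + k) / s) * (B * exp (-B * y))) y := by
  have hexp : HasDerivAt (fun y => exp (y / s - B * y))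
      (exp (y / s - B * y) * (1 / s - B * 1)) y :=
    (((hasDerivAt_id y).div_const s).sub ((hasDerivAt_id y).const_mul B)).exp
  have hE1 : HasDerivAt (fun y => E1 ((y + k) / s))
      (-(exp (-((y + k) / s)) / ((y + k) / s)) * (1 / s)) y :=
    (hasDerivAt_E1 (by positivity)).comp y (((hasDerivAt_id y).add_const k).div_const s)
  have hE1k : HasDerivAt (fun y => E1 (B * (y + k)))
      (-(exp (-(B * (y + k))) / (B * (y + k))) * (B * 1)) y :=
    (hasDerivAt_E1 (by positivity)).comp y (((hasDerivAt_id y).add_const k).const_mul B)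
  have e₁ : exp (y / s - B * y) = exp (y / s) * exp (-B * y) := by rw [← exp_add]; ring_nf
  have e₂ : exp (-((y + k) / s)) = exp (-(k / s)) / exp (y / s) := by
    rw [← exp_sub]; ring_nf
  have e₃ : exp (B * k - k / s) = exp (B * k) * exp (-(k / s)) := by rw [← exp_add]; ring_nf
  have e₄ : exp (-(B * (y + k))) = exp (-B * y) / exp (B * k) := by rw [← exp_sub]; ring_nf
  refine ((hexp.mul hE1).sub (hE1k.const_mul _)).const_mul _ |>.congr_deriv ?_
  have h1Bs : 1 - B * s ≠ 0 := sub_ne_zero.mpr hBs.symm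
  rw [e₁, e₂, e₃, e₄]
  field_simp
  ring

lemma tendsto_exp_div_mul_E1_mul_exp_antideriv (hs : 0 < s) (hB : 0 < B) :
    Tendsto (fun y => B * s / (1 - B * s) *
        (exp (y / s - B * y) * E1 ((y + k) / s) - exp (B * k - k / s) * E1 (B * (y + k))))
      atTop (𝓝 0) := by
  have harg : Tendsto (fun y => (y + k) / s) atTop atTop :=
    (tendsto_atTop_add_const_right _ k tendsto_id).atTop_div_const hs
  have hexp := (tendsto_exp_neg_atTop_nhds_zero.comp (tendsto_id.const_mul_atTop hB)).mul_const
    (exp (-(k / s)))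
  have hfirst : Tendsto (fun y => exp (y / s - B * y) * E1 ((y + k) / s)) atTop (𝓝 0) := by
    have := hexp.mul (tendsto_exp_mul_E1_atTop.comp harg)
    rw [zero_mul, zero_mul] at this
    refine this.congr fun y => ?_
    simp only [Function.comp_apply, id_eq]
    rw [← mul_assoc, ← exp_add, ← exp_add]
    ring_nf
  have hsecond := tendsto_E1_atTop.comp
    ((tendsto_atTop_add_const_right _ k tendsto_id).const_mul_atTop hB)
  simpa [Function.comp_def] using
    (hfirst.sub (hsecond.const_mul (exp (B * k - k / s)))).const_mul (B * s / (1 - B * s))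

theorem integral_exp_div_mul_E1_mul_exp {Θ : ℝ} (hΘk : 0 < Θ + k) (hs : 0 < s) (hB : 0 < B)
    (hBs : B * s ≠ 1) :
    IntegrableOn (fun y => exp (y / s) * E1 ((y + k) / s) * (B * exp (-B * y))) (Ioi Θ) ∧
      ∫ y in Ioi Θ, exp (y / s) * E1 ((y + k) / s) * (B * exp (-B * y))
        = B * s / (1 - B * s) *
          (exp (B * k - k / s) * E1 (B * (Θ + k))
            - exp (Θ / s - B * Θ) * E1 ((Θ + k) / s)) := by
  refine (integrableOn_Ioi_and_integral_eq_neg_of_hasDerivAt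
    (fun y (hy : Θ ≤ y) => hasDerivAt_exp_div_mul_E1_mul_exp_antideriv hs hB hBs (by linarith))
    (fun y (hy : Θ < y) => ?_) (tendsto_exp_div_mul_E1_mul_exp_antideriv hs hB)).imp_right
    fun h => h.trans (by ring)
  have := E1_nonneg (div_pos (by linarith : 0 < y + k) hs)
  positivity

end OuterIntegrals

/-- the double integral of the interference-limited part equals `Ω·𝕁₂(Ω)`. -/
theorem double_integral_eq_J2 (Ω Ip Θ σe B : ℝ) (hΩ : 0 < Ω) (hIp : 0 < Ip)
    (hΘ : 0 < Θ) (hσ : 0 ≤ σe) (hB : 0 < B) (hne : B * Ip * Ω ≠ 1) :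
    ∫ y in Set.Ioi Θ,
        (∫ x in Set.Ioi σe, Real.log (1 + Ip / y * x) * Real.exp (-x / Ω))
          * (B * Real.exp (-B * y))
      = Ω * J2 σe Ip Θ B Ω := by
  have hinner : ∀ y ∈ Ioi Θ,
      (∫ x in Ioi σe, log (1 + Ip / y * x) * exp (-x / Ω)) * (B * exp (-B * y))
        = Ω * exp (-σe / Ω) * (log (1 + Ip * σe / y) * (B * exp (-B * y)))
          + Ω * (exp (y / (Ip * Ω)) * E1 ((y + Ip * σe) / (Ip * Ω)) * (B * exp (-B * y))) := by
    intro y (hy : Θ < y)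
    have hy : 0 < y := hΘ.trans hy
    rw [integral_log_one_add_mul_mul_exp (by positivity) hσ hΩ,
      show 1 / (Ip / y * Ω) = y / (Ip * Ω) by field_simp,
      show (1 + Ip / y * σe) / (Ip / y * Ω) = (y + Ip * σe) / (Ip * Ω) by field_simp,
      show Ip / y * σe = Ip * σe / y by ring]
    ring
  obtain ⟨hint₁, heq₁⟩ := integral_log_one_add_div_mul_exp (mul_nonneg hIp.le hσ) hΘ hB
  obtain ⟨hint₂, heq₂⟩ := integral_exp_div_mul_E1_mul_exp (Θ := Θ) (k := Ip * σe)
    (by positivity) (mul_pos hIp hΩ) hB (by rwa [← mul_assoc])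
  rw [setIntegral_congr_fun measurableSet_Ioi hinner, integral_add (hint₁.const_mul _)
    (hint₂.const_mul _), integral_const_mul, integral_const_mul, heq₁, heq₂, J2]
  have e₁ : (Θ + Ip * σe) / (Ip * Ω) = Θ / (Ip * Ω) + σe / Ω := by field_simp
  have e₂ : Ip * σe / (Ip * Ω) = σe / Ω := by field_simp
  -- stated in the normal form that `field_simp` gives to the denominator `1 - Ip * Ω * B`
  have hden : 1 - Ω * B * Ip ≠ 0 := by contrapose! hne; linarith
  rw [e₁, e₂]
  simp only [exp_add, exp_sub, neg_div, exp_neg, neg_mul]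
  field_simp
  ring
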